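/- Let M_s(t) be a C¹ family of symmetric n×n matrices with d/dt M_s having eigenvalues bounded above by λ_max(Ṁ_s), and let G_v > 0, G_f > 0, G_p symmetric positive definite. Along trajectories of (I + G_f M_s) ë_p + G_v ė_p + G_p e_p = 0, the function V₁ = ½ ė_pᵀ ė_p + ½ G_f ė_pᵀ M_s ė_p + ½ e_pᵀ G_p e_p has derivative V̇₁ = −½ ė_pᵀ (2G_v I − G_f Ṁ_s) ė_p, and V̇₁ < 0 whenever ė_p ≠ 0, provided G_f < 2G_v / λ_max(Ṁ_s). -/

import Mathlib

/-!
`V₁ = ½ ėᵀ (I + G_f M_s) ė + ½ eᵀ G_p e` is the mechanical energy of a system with inertia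
`I + G_f M_s`. Differentiating the two quadratic forms, the inertial and spring powers
`ėᵀ (I + G_f M_s) ë + ėᵀ G_p e` add up, by the dynamics, to the damping power `−G_v |ė|²`, so
`V̇₁ = −G_v |ė|² + ½ G_f ėᵀ Ṁ_s ė`; the eigenvalue bound on `Ṁ_s` makes this negative as soon
as `G_f λ_max < 2 G_v`.
-/

open Matrix
open scoped RealInnerProductSpace

theorem Matrix.IsSymm.dotProduct_mulVec_comm {ι R : Type*} [Fintype ι] [CommSemiring R]
    {A : Matrix ι ι R} (hA : A.IsSymm) (x y : ι → R) : x ⬝ᵥ A *ᵥ y = y ⬝ᵥ A *ᵥ x := by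
  rw [dotProduct_mulVec, dotProduct_comm, ← mulVec_transpose, hA.eq]

section
variable {𝕜 ι κ : Type*} [NontriviallyNormedField 𝕜] [Fintype ι] {t : 𝕜}

theorem HasDerivAt.dotProduct {u v : 𝕜 → ι → 𝕜} {u' v' : ι → 𝕜}
    (hu : HasDerivAt u u' t) (hv : HasDerivAt v v' t) :
    HasDerivAt (fun s => u s ⬝ᵥ v s) (u' ⬝ᵥ v t + u t ⬝ᵥ v') t := by
  have := HasDerivAt.fun_sum (u := Finset.univ) fun i _ =>
    (hasDerivAt_pi.1 hu i).mul (hasDerivAt_pi.1 hv i)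
  rwa [Finset.sum_add_distrib] at this

theorem HasDerivAt.mulVec {A : 𝕜 → Matrix κ ι 𝕜} {A' : Matrix κ ι 𝕜} {x : 𝕜 → ι → 𝕜}
    {x' : ι → 𝕜} (hA : ∀ i j, HasDerivAt (fun s => A s i j) (A' i j) t)
    (hx : HasDerivAt x x' t) :
    HasDerivAt (fun s => A s *ᵥ x s) (A' *ᵥ x t + A t *ᵥ x') t :=
  hasDerivAt_pi.2 fun i => (hasDerivAt_pi.2 (hA i)).dotProduct hx

theorem HasDerivAt.dotProduct_mulVec_self {A : 𝕜 → Matrix ι ι 𝕜} {A' : Matrix ι ι 𝕜}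
    {x : 𝕜 → ι → 𝕜} {x' : ι → 𝕜} (hsymm : (A t).IsSymm)
    (hA : ∀ i j, HasDerivAt (fun s => A s i j) (A' i j) t) (hx : HasDerivAt x x' t) :
    HasDerivAt (fun s => x s ⬝ᵥ A s *ᵥ x s) (2 * (x t ⬝ᵥ A t *ᵥ x') + x t ⬝ᵥ A' *ᵥ x t) t := by
  convert hx.dotProduct (HasDerivAt.mulVec hA hx) using 1
  rw [dotProduct_add, hsymm.dotProduct_mulVec_comm x']
  ring

theorem HasDerivAt.ofLp {p : ENNReal} [Fact (1 ≤ p)] {f : 𝕜 → PiLp p (fun _ : ι => 𝕜)}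
    {f' : PiLp p (fun _ : ι => 𝕜)} (hf : HasDerivAt f f' t) :
    HasDerivAt (fun s => (f s).ofLp) f'.ofLp t :=
  (PiLp.hasFDerivAt_ofLp p (f t)).comp_hasDerivAt t hf

end

theorem EuclideanSpace.real_inner_eq_dotProduct {ι : Type*} [Fintype ι]
    (x y : EuclideanSpace ℝ ι) : ⟪x, y⟫ = x.ofLp ⬝ᵥ y.ofLp := by
  rw [EuclideanSpace.inner_eq_star_dotProduct, star_trivial, dotProduct_comm]

theorem hasDerivAt_energy_of_damped_dynamics {ι : Type*} [Fintype ι] {J : ℝ → Matrix ι ι ℝ}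
    {J' Gp : Matrix ι ι ℝ} {x v : ℝ → ι → ℝ} {a : ι → ℝ} {Gv t : ℝ} (hJsymm : (J t).IsSymm)
    (hJ : ∀ i j, HasDerivAt (fun s => J s i j) (J' i j) t) (hGp : Gp.IsSymm)
    (hx : HasDerivAt x (v t) t) (hv : HasDerivAt v a t)
    (hdyn : J t *ᵥ a + Gv • v t + Gp *ᵥ x t = 0) :
    HasDerivAt (fun s => 1 / 2 * (v s ⬝ᵥ J s *ᵥ v s) + 1 / 2 * (x s ⬝ᵥ Gp *ᵥ x s))
      (-Gv * (v t ⬝ᵥ v t) + 1 / 2 * (v t ⬝ᵥ J' *ᵥ v t)) t := by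
  have hkin := hv.dotProduct_mulVec_self hJsymm hJ
  have hpot := hx.dotProduct_mulVec_self (A' := 0) hGp fun i j => hasDerivAt_const t (Gp i j)
  refine ((hkin.const_mul (1 / 2)).add (hpot.const_mul (1 / 2))).congr_deriv ?_
  have hpower := congrArg (v t ⬝ᵥ ·) hdyn
  simp only [dotProduct_add, dotProduct_smul, smul_eq_mul, dotProduct_zero] at hpower
  rw [zero_mulVec, dotProduct_zero, hGp.dotProduct_mulVec_comm (x t)]
  linear_combination hpower

theorem force_feedback_lyapunov_general
    (n : ℕ)
    (Ms Ms' : ℝ → Matrix (Fin n) (Fin n) ℝ)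
    (hMsym : ∀ t, (Ms t).IsSymm)
    (hMder : ∀ t i j, HasDerivAt (fun s => Ms s i j) (Ms' t i j) t)
    (lmax : ℝ) (hlmax : 0 < lmax)
    (hM'bound : ∀ t (x : EuclideanSpace ℝ (Fin n)),
      ⟪x, (WithLp.equiv 2 (Fin n → ℝ)).symm ((Ms' t).mulVec x)⟫ ≤ lmax * ‖x‖ ^ 2)
    (Gv Gf : ℝ) (hGf : 0 < Gf)
    (Gp : Matrix (Fin n) (Fin n) ℝ) (hGpsym : Gp.IsSymm)
    (e e' e'' : ℝ → EuclideanSpace ℝ (Fin n))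
    (he : ∀ t, HasDerivAt e (e' t) t)
    (he' : ∀ t, HasDerivAt e' (e'' t) t)
    (hdyn : ∀ t,
      (WithLp.equiv 2 (Fin n → ℝ)).symm
          (((1 : Matrix (Fin n) (Fin n) ℝ) + Gf • Ms t).mulVec (e'' t))
        + Gv • e' t
        + (WithLp.equiv 2 (Fin n → ℝ)).symm (Gp.mulVec (e t)) = 0)
    (V₁ : ℝ → ℝ)
    (hV₁ : V₁ = fun t =>
      (1 / 2) * ⟪e' t, e' t⟫
      + (1 / 2) * Gf * ⟪e' t, (WithLp.equiv 2 (Fin n → ℝ)).symm ((Ms t).mulVec (e' t))⟫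
      + (1 / 2) * ⟪e t, (WithLp.equiv 2 (Fin n → ℝ)).symm (Gp.mulVec (e t))⟫) :
    (∀ t, HasDerivAt V₁
      (-(1 / 2) * ⟪e' t, (WithLp.equiv 2 (Fin n → ℝ)).symm
        ((((2 * Gv) • (1 : Matrix (Fin n) (Fin n) ℝ)) - Gf • Ms' t).mulVec (e' t))⟫) t) ∧
    (Gf < 2 * Gv / lmax → ∀ t, e' t ≠ 0 → deriv V₁ t < 0) := by
  simp only [EuclideanSpace.real_inner_eq_dotProduct, WithLp.equiv_symm_apply] at hM'bound hV₁ ⊢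
  have hV : V₁ = fun s => 1 / 2 * ((e' s).ofLp ⬝ᵥ (1 + Gf • Ms s) *ᵥ (e' s).ofLp)
      + 1 / 2 * ((e s).ofLp ⬝ᵥ Gp *ᵥ (e s).ofLp) := by
    rw [hV₁]
    funext s
    simp only [add_mulVec, one_mulVec, smul_mulVec, dotProduct_add, dotProduct_smul, smul_eq_mul]
    ring
  have hrate : ∀ t, -(1 / 2) * ((e' t).ofLp ⬝ᵥ ((2 * Gv) • 1 - Gf • Ms' t) *ᵥ (e' t).ofLp)
      = -Gv * ((e' t).ofLp ⬝ᵥ (e' t).ofLp) + 1 / 2 * ((e' t).ofLp ⬝ᵥ (Gf • Ms' t) *ᵥ (e' t).ofLp) :=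
    fun t => by
      simp only [sub_mulVec, smul_mulVec, one_mulVec, dotProduct_sub, dotProduct_smul, smul_eq_mul]
      ring
  have hderiv : ∀ t, HasDerivAt V₁
      (-(1 / 2) * ((e' t).ofLp ⬝ᵥ ((2 * Gv) • 1 - Gf • Ms' t) *ᵥ (e' t).ofLp)) t := fun t => by
    rw [hV, hrate]
    refine hasDerivAt_energy_of_damped_dynamics (isSymm_one.add ((hMsym t).smul Gf))
      (fun i j => ?_) hGpsym (he t).ofLp (he' t).ofLp (by simpa using congrArg WithLp.ofLp (hdyn t))
    simpa using ((hMder t i j).const_mul Gf).const_add ((1 : Matrix (Fin n) (Fin n) ℝ) i j)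
  refine ⟨hderiv, fun hGf_lt t hne => ?_⟩
  have hGf_lmax : Gf * lmax < 2 * Gv := (lt_div_iff₀ hlmax).1 hGf_lt
  have hdissipation : Gf * ((e' t).ofLp ⬝ᵥ Ms' t *ᵥ (e' t).ofLp) < 2 * Gv * ‖e' t‖ ^ 2 :=
    calc Gf * ((e' t).ofLp ⬝ᵥ Ms' t *ᵥ (e' t).ofLp) ≤ Gf * (lmax * ‖e' t‖ ^ 2) :=
          mul_le_mul_of_nonneg_left (hM'bound t (e' t)) hGf.le
      _ = Gf * lmax * ‖e' t‖ ^ 2 := by ring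
      _ < 2 * Gv * ‖e' t‖ ^ 2 := by gcongr
  rw [(hderiv t).deriv, hrate, ← EuclideanSpace.real_inner_eq_dotProduct,
    real_inner_self_eq_norm_sq, smul_mulVec, dotProduct_smul, smul_eq_mul]
  linarith

/-- Force-error feedback analysis: along `(I + G_f M_s) ë + G_v ė + G_p e = 0` with
`M_s(t)` symmetric (entrywise `C¹`, derivative `M'` with eigenvalues bounded by `λmax`),
the Lyapunov function `V₁ = ½ ėᵀė + ½ G_f ėᵀ M_s ė + ½ eᵀ G_p e` satisfies
`V̇₁ = −½ ėᵀ (2 G_v I − G_f Ṁ_s) ė`, which is negative for `ė ≠ 0` provided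
`G_f < 2 G_v / λmax`. -/
theorem force_feedback_lyapunov
    (n : ℕ)
    (Ms Ms' : ℝ → Matrix (Fin n) (Fin n) ℝ)
    (hMsym : ∀ t, (Ms t).IsSymm)
    (hMder : ∀ t i j, HasDerivAt (fun s => Ms s i j) (Ms' t i j) t)
    (lmax : ℝ) (hlmax : 0 < lmax)
    (hM'bound : ∀ t (x : EuclideanSpace ℝ (Fin n)),
      ⟪x, (WithLp.equiv 2 (Fin n → ℝ)).symm ((Ms' t).mulVec x)⟫ ≤ lmax * ‖x‖ ^ 2)
    (Gv Gf : ℝ) (hGv : 0 < Gv) (hGf : 0 < Gf)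
    (Gp : Matrix (Fin n) (Fin n) ℝ) (hGp : Gp.PosDef) (hGpsym : Gp.IsSymm)
    (e e' e'' : ℝ → EuclideanSpace ℝ (Fin n))
    (he : ∀ t, HasDerivAt e (e' t) t)
    (he' : ∀ t, HasDerivAt e' (e'' t) t)
    (hdyn : ∀ t,
      (WithLp.equiv 2 (Fin n → ℝ)).symm
          (((1 : Matrix (Fin n) (Fin n) ℝ) + Gf • Ms t).mulVec (e'' t))
        + Gv • e' t
        + (WithLp.equiv 2 (Fin n → ℝ)).symm (Gp.mulVec (e t)) = 0)
    (V₁ : ℝ → ℝ)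
    (hV₁ : V₁ = fun t =>
      (1 / 2) * ⟪e' t, e' t⟫
      + (1 / 2) * Gf * ⟪e' t, (WithLp.equiv 2 (Fin n → ℝ)).symm ((Ms t).mulVec (e' t))⟫
      + (1 / 2) * ⟪e t, (WithLp.equiv 2 (Fin n → ℝ)).symm (Gp.mulVec (e t))⟫) :
    (∀ t, HasDerivAt V₁
      (-(1 / 2) * ⟪e' t, (WithLp.equiv 2 (Fin n → ℝ)).symm
        ((((2 * Gv) • (1 : Matrix (Fin n) (Fin n) ℝ)) - Gf • Ms' t).mulVec (e' t))⟫) t) ∧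
    (Gf < 2 * Gv / lmax → ∀ t, e' t ≠ 0 → deriv V₁ t < 0) :=
  force_feedback_lyapunov_general n Ms Ms' hMsym hMder lmax hlmax hM'bound Gv Gf hGf Gp hGpsym e e'
    e'' he he' hdyn V₁ hV₁
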